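/- Let Y, Y₁, Y₂, ... be i.i.d. real random variables with mean μ, bounded in absolute value by M > 0, and let N_n be a Poisson random variable with mean n, independent of the Y_i. Then for any v ≥ 2(30e)² E[Y²], with d = 30eM, for all λ > 0: P{Σ_{i=1}^{N_n} Y_i − nμ ≥ λ} ≤ exp(−λ²/(2(nv + dλ))). -/

import Mathlib

open MeasureTheory ProbabilityTheory
open scoped NNReal ENNReal

/-!
Chernoff's method. For `0 ≤ t` with `t M ≤ 1` one has `e^{tY} ≤ 1 + tY + t²Y²`, so
`φ(t) := E e^{tY} ≤ 1 + t m + t² E[Y²]`. Conditioning on the independent Poisson count gives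
`E e^{t S} = exp (n (φ(t) - 1))` for the compound sum `S`, hence
`P(S - n m ≥ λ) ≤ exp (n (φ(t) - 1) - t (n m + λ)) ≤ exp (n t² E[Y²] - t λ)`.
The choice `t = λ / (n v + D λ)` makes `t M ≤ 1` and `2 n t E[Y²] ≤ λ`, and the exponent
becomes `-λ² / (2 (n v + D λ))`.
-/

open Real Finset

theorem lintegral_ofReal_pow_poissonMeasure (r : ℝ≥0) {x : ℝ} (hx : 0 ≤ x) :
    ∫⁻ k, ENNReal.ofReal (x ^ k) ∂poissonMeasure r = ENNReal.ofReal (exp (r * (x - 1))) := by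
  have hsum := (NormedSpace.expSeries_div_hasSum_exp ((r : ℝ) * x)).mul_left (exp (-r))
  rw [← exp_eq_exp_ℝ, ← exp_add, show -(r : ℝ) + r * x = r * (x - 1) by ring] at hsum
  have hterm (k : ℕ) : x ^ k * (exp (-r) * r ^ k / k.factorial) =
      exp (-r) * ((r * x) ^ k / k.factorial) := by
    rw [mul_pow]
    ring
  simp_rw [lintegral_countable', poissonMeasure_singleton,
    ← ENNReal.ofReal_mul (pow_nonneg hx _), hterm]
  rw [← ENNReal.ofReal_tsum_of_nonneg (fun k => by positivity) hsum.summable, hsum.tsum_eq]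

set_option linter.deprecated false in
theorem poissonPMF_toMeasure (r : ℝ≥0) : (poissonPMF r).toMeasure = poissonMeasure r :=
  Measure.ext_of_singleton fun k => by
    rw [PMF.toMeasure_apply_singleton _ _ (measurableSet_singleton k), poissonMeasure_singleton]
    rfl

section

variable {Ω : Type*} [MeasurableSpace Ω] {μ : Measure Ω}

theorem integrable_and_integral_eq_of_lintegral_ofReal_eq {f : Ω → ℝ}
    (hfm : AEStronglyMeasurable f μ) (hf : 0 ≤ᵐ[μ] f) {c : ℝ} (hc : 0 ≤ c)
    (h : ∫⁻ ω, ENNReal.ofReal (f ω) ∂μ = ENNReal.ofReal c) :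
    Integrable f μ ∧ ∫ ω, f ω ∂μ = c :=
  ⟨(lintegral_ofReal_ne_top_iff_integrable hfm hf).mp (h ▸ ENNReal.ofReal_ne_top),
    by rw [integral_eq_lintegral_of_nonneg_ae hf hfm, h, ENNReal.toReal_ofReal hc]⟩

theorem ProbabilityTheory.IndepFun.lintegral_comp_eq_lintegral_lintegral [IsFiniteMeasure μ]
    {α β : Type*} [MeasurableSpace α] [MeasurableSpace β] {N : Ω → α} {X : Ω → β}
    (hN : Measurable N) (hX : Measurable X) (hNX : IndepFun N X μ) {g : α → β → ℝ≥0∞}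
    (hg : Measurable (Function.uncurry g)) :
    ∫⁻ ω, g (N ω) (X ω) ∂μ = ∫⁻ a, ∫⁻ ω, g a (X ω) ∂μ ∂(μ.map N) := by
  calc ∫⁻ ω, g (N ω) (X ω) ∂μ
      = ∫⁻ p, Function.uncurry g p ∂(μ.map (fun ω => (N ω, X ω))) :=
        (lintegral_map hg (hN.prodMk hX)).symm
    _ = ∫⁻ a, ∫⁻ b, g a b ∂(μ.map X) ∂(μ.map N) := by
        rw [hNX.map_prod_eq_prod_map_map hN.aemeasurable hX.aemeasurable,
          lintegral_prod _ hg.aemeasurable]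
        rfl
    _ = ∫⁻ a, ∫⁻ ω, g a (X ω) ∂μ ∂(μ.map N) := by
        refine lintegral_congr fun a => ?_
        exact lintegral_map hg.of_uncurry_left hX

theorem mgf_le_one_add_mul_add_sq_mul [IsProbabilityMeasure μ] {X : Ω → ℝ} {M t : ℝ}
    (hX : AEMeasurable X μ) (hXM : ∀ᵐ ω ∂μ, |X ω| ≤ M) (htM : |t| * M ≤ 1) :
    mgf X μ t ≤ 1 + t * ∫ ω, X ω ∂μ + t ^ 2 * ∫ ω, X ω ^ 2 ∂μ := by
  have hX1 : Integrable X μ := .of_bound hX.aestronglyMeasurable M (by simpa using hXM)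
  have hX2 : Integrable (fun ω => X ω ^ 2) μ :=
    .of_bound (hX.pow_const 2).aestronglyMeasurable (M ^ 2) <| by
      filter_upwards [hXM] with ω hω
      simpa using pow_le_pow_left₀ (abs_nonneg _) hω 2
  have hexp : Integrable (fun ω => exp (t * X ω)) μ :=
    integrable_exp_mul_of_mem_Icc hX (by filter_upwards [hXM] with ω hω using abs_le.mp hω)
  have hpoint : ∀ᵐ ω ∂μ, exp (t * X ω) ≤ 1 + t * X ω + t ^ 2 * X ω ^ 2 := by
    filter_upwards [hXM] with ω hω
    have htX : |t * X ω| ≤ 1 := by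
      rw [abs_mul]
      exact (mul_le_mul_of_nonneg_left hω (abs_nonneg t)).trans htM
    have := (abs_le.mp (abs_exp_sub_one_sub_id_le htX)).2
    linarith [mul_pow t (X ω) 2]
  have hlin : Integrable (fun ω => 1 + t * X ω) μ := (integrable_const 1).add (hX1.const_mul t)
  calc mgf X μ t ≤ ∫ ω, 1 + t * X ω + t ^ 2 * X ω ^ 2 ∂μ :=
        integral_mono_ae hexp (hlin.add (hX2.const_mul _)) hpoint
    _ = 1 + t * ∫ ω, X ω ∂μ + t ^ 2 * ∫ ω, X ω ^ 2 ∂μ := by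
        rw [integral_add hlin (hX2.const_mul _), integral_add (integrable_const 1)
          (hX1.const_mul t), integral_const_mul, integral_const_mul]
        simp

theorem measurable_sum_range_uncurry :
    Measurable fun p : ℕ × (ℕ → ℝ) => ∑ i ∈ range p.1, p.2 i :=
  measurable_from_prod_countable_right fun k =>
    Finset.measurable_sum (range k) fun i _ => measurable_pi_apply i

def randomSum (Y : ℕ → Ω → ℝ) (N : Ω → ℕ) (ω : Ω) : ℝ := ∑ i ∈ range (N ω), Y i ω

theorem measurable_randomSum {Y : ℕ → Ω → ℝ} {N : Ω → ℕ} (hY : ∀ i, Measurable (Y i))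
    (hN : Measurable N) : Measurable (randomSum Y N) :=
  measurable_sum_range_uncurry.comp (hN.prodMk (measurable_pi_lambda _ hY))

theorem lintegral_ofReal_exp_mul_randomSum [IsProbabilityMeasure μ] {Y : ℕ → Ω → ℝ}
    {N : Ω → ℕ} {r : ℝ≥0} {t : ℝ} (hY : ∀ i, Measurable (Y i)) (hiid : iIndepFun Y μ)
    (hident : ∀ i, IdentDistrib (Y i) (Y 0) μ μ) (hint : Integrable (fun ω => exp (t * Y 0 ω)) μ)
    (hN : Measurable N) (hlaw : μ.map N = poissonMeasure r)
    (hNY : IndepFun N (fun ω i => Y i ω) μ) :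
    ∫⁻ ω, ENNReal.ofReal (exp (t * randomSum Y N ω)) ∂μ =
      ENNReal.ofReal (exp (r * (mgf (Y 0) μ t - 1))) := by
  have hpartial (k : ℕ) : ∫⁻ ω, ENNReal.ofReal (exp (t * ∑ i ∈ range k, Y i ω)) ∂μ =
      ENNReal.ofReal (mgf (Y 0) μ t ^ k) := by
    have hint_sum := hiid.integrable_exp_mul_sum hY (s := range k) fun i _ =>
      ((hident i).comp (measurable_const_mul t).exp).integrable_iff.mpr hint
    have hmgf : mgf (∑ i ∈ range k, Y i) μ t = mgf (Y 0) μ t ^ k := by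
      rw [hiid.mgf_sum hY, prod_eq_pow_card fun i _ => mgf_congr_of_identDistrib _ _ (hident i) t,
        card_range]
    rw [← hmgf, mgf, ofReal_integral_eq_lintegral_ofReal hint_sum
      (.of_forall fun ω => (exp_pos _).le)]
    simp [Finset.sum_apply]
  have hg : Measurable (Function.uncurry fun k (y : ℕ → ℝ) =>
      ENNReal.ofReal (exp (t * ∑ i ∈ range k, y i))) :=
    (measurable_sum_range_uncurry.const_mul t).exp.ennreal_ofReal
  rw [← lintegral_ofReal_pow_poissonMeasure r mgf_nonneg, ← hlaw, ← lintegral_congr hpartial]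
  exact hNY.lintegral_comp_eq_lintegral_lintegral hN (measurable_pi_lambda _ hY) hg

theorem measure_randomSum_ge_le_exp [IsProbabilityMeasure μ] {Y : ℕ → Ω → ℝ} {N : Ω → ℕ}
    {r : ℝ≥0} {t : ℝ} (hY : ∀ i, Measurable (Y i)) (hiid : iIndepFun Y μ)
    (hident : ∀ i, IdentDistrib (Y i) (Y 0) μ μ) (hint : Integrable (fun ω => exp (t * Y 0 ω)) μ)
    (hN : Measurable N) (hlaw : μ.map N = poissonMeasure r)
    (hNY : IndepFun N (fun ω i => Y i ω) μ) (ht : 0 ≤ t) (a : ℝ) :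
    μ {ω | a ≤ randomSum Y N ω} ≤ ENNReal.ofReal (exp (-t * a + r * (mgf (Y 0) μ t - 1))) := by
  obtain ⟨hSint, hSmgf⟩ := integrable_and_integral_eq_of_lintegral_ofReal_eq
    ((measurable_randomSum hY hN).const_mul t).exp.aestronglyMeasurable
    (.of_forall fun ω => (exp_pos _).le) (exp_pos _).le
    (lintegral_ofReal_exp_mul_randomSum hY hiid hident hint hN hlaw hNY)
  rw [← ofReal_measureReal, exp_add, ← hSmgf]
  exact ENNReal.ofReal_le_ofReal (measure_ge_le_exp_mul_mgf a ht hSint)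

end

theorem bernstein_parameter_bounds {n b v c M lam : ℝ} (hn : 0 ≤ n) (hb : 0 ≤ b) (hc : 1 ≤ c)
    (hM : 0 < M) (hlam : 0 < lam) (hv : 2 * c ^ 2 * b ≤ v) :
    0 < n * v + c * M * lam ∧ n * (2 * b) ≤ n * v + c * M * lam ∧
      lam / (n * v + c * M * lam) * M ≤ 1 := by
  have hnb : n * (2 * b) ≤ n * v := by
    gcongr
    nlinarith [mul_le_mul_of_nonneg_right (one_le_pow₀ hc : 1 ≤ c ^ 2) hb]
  have hnv : 0 ≤ n * v := le_trans (by positivity) hnb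
  have hMlam : lam * M ≤ c * M * lam := by nlinarith [mul_pos hM hlam]
  have hK : 0 < n * v + c * M * lam := by linarith [mul_pos hlam hM]
  refine ⟨hK, by linarith [mul_pos hlam hM], ?_⟩
  rw [div_mul_eq_mul_div, div_le_one hK]
  linarith

theorem bernstein_exponent_le {n b m φ lam K : ℝ} (hn : 0 ≤ n) (hK : 0 < K)
    (hnb : n * (2 * b) ≤ K) (hφ : φ ≤ 1 + lam / K * m + (lam / K) ^ 2 * b) :
    -(lam / K) * (n * m + lam) + n * (φ - 1) ≤ -(lam ^ 2 / 2) / K := by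
  set t := lam / K
  calc -t * (n * m + lam) + n * (φ - 1)
      ≤ -t * lam + t ^ 2 * (n * b) := by nlinarith [mul_le_mul_of_nonneg_left hφ hn]
    _ ≤ -t * lam + t ^ 2 * K / 2 := by nlinarith [mul_le_mul_of_nonneg_left hnb (sq_nonneg t)]
    _ = -(lam ^ 2 / 2) / K := by
        simp only [t]
        field_simp
        ring

theorem compound_poisson_bernstein
    {Ω : Type*} [MeasurableSpace Ω] (μ : Measure Ω) [IsProbabilityMeasure μ]
    (Y : ℕ → Ω → ℝ) (hYmeas : ∀ i, Measurable (Y i))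
    (hiid : iIndepFun Y μ)
    (hident : ∀ i, μ.map (Y i) = μ.map (Y 0))
    (M : ℝ) (hM : 0 < M) (hbd : ∀ i, ∀ᵐ ω ∂μ, |Y i ω| ≤ M)
    (m : ℝ) (hmean : ∫ ω, Y 0 ω ∂μ = m)
    (N : Ω → ℕ) (hNmeas : Measurable N) (n : ℕ)
    (hN : μ.map N = (ProbabilityTheory.poissonPMF (n : ℝ≥0)).toMeasure)
    (hindep : IndepFun N (fun ω i => Y i ω) μ)
    (v : ℝ) (hv : 2 * (Real.exp 1 * 30) ^ 2 * ∫ ω, (Y 0 ω) ^ 2 ∂μ ≤ v)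
    (D : ℝ) (hD : D = Real.exp 1 * 30 * M)
    (lam : ℝ) (hlam : 0 < lam) :
    μ {ω | (∑ i ∈ Finset.range (N ω), Y i ω) - n * m ≥ lam}
      ≤ ENNReal.ofReal (Real.exp (-(lam ^ 2 / 2) / (n * v + D * lam))) := by
  subst hD
  obtain ⟨hK, hnbK, htM⟩ := bernstein_parameter_bounds n.cast_nonneg
    (integral_nonneg fun ω => sq_nonneg (Y 0 ω)) (by linarith [add_one_le_exp 1]) hM hlam hv
  set K := n * v + exp 1 * 30 * M * lam
  set t := lam / K
  have ht : 0 ≤ t := by positivity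
  have hφ := mgf_le_one_add_mul_add_sq_mul (hYmeas 0).aemeasurable (hbd 0)
    (by rwa [abs_of_nonneg ht])
  rw [hmean] at hφ
  have hint : Integrable (fun ω => exp (t * Y 0 ω)) μ := integrable_exp_mul_of_mem_Icc
    (hYmeas 0).aemeasurable (by filter_upwards [hbd 0] with ω hω using abs_le.mp hω)
  have hS := measure_randomSum_ge_le_exp hYmeas hiid
    (fun i => ⟨(hYmeas i).aemeasurable, (hYmeas 0).aemeasurable, hident i⟩) hint hNmeas
    (hN.trans (poissonPMF_toMeasure _)) hindep ht (n * m + lam)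
  rw [NNReal.coe_natCast] at hS
  calc μ {ω | (∑ i ∈ Finset.range (N ω), Y i ω) - n * m ≥ lam}
      ≤ μ {ω | n * m + lam ≤ randomSum Y N ω} :=
        measure_mono fun ω (hω : _ ≥ lam) => show _ ≤ randomSum Y N ω by
          unfold randomSum; linarith
    _ ≤ ENNReal.ofReal (exp (-t * (n * m + lam) + n * (mgf (Y 0) μ t - 1))) := hS
    _ ≤ ENNReal.ofReal (exp (-(lam ^ 2 / 2) / K)) := by
        gcongr
        exact bernstein_exponent_le n.cast_nonneg hK hnbK hφ
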